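/- arXiv:2208.02082 — 2 statements merged into one kernel-verified Lean document; each statement's English description precedes it below -/
import Mathlib

section
/- Let g = p ⊕ k be a Cartan decomposition of a semisimple real Lie algebra with orthonormal basis e_1,...,e_n of p with respect to an invariant form, and let D = Σ_i e_i ⊗ X_i ∈ Cl(p) ⊗ Ug (with X_i the dual basis in p, so X_i = e_i). Then D² = −1 ⊗ (Ω_g − Ω_k) + Σ_{i<j} e_i e_j ⊗ [X_i, X_j], where the products e_i e_j are taken in the Clifford algebra Cl(p) and [X_i, X_j] ∈ k. -/
/-!
Expanding the square of `D = Σ eᵢ ⊗ Xᵢ` gives the diagonal terms `eᵢ² ⊗ Xᵢ² = -1 ⊗ Xᵢ²` and,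
for `i < j`, the pairs `eᵢeⱼ ⊗ XᵢXⱼ + eⱼeᵢ ⊗ XⱼXᵢ`; since orthogonal Clifford generators
anticommute, each pair collapses to `eᵢeⱼ ⊗ [Xᵢ, Xⱼ]`.
-/

open scoped TensorProduct

namespace Finset

variable {ι M : Type*} [Fintype ι] [LinearOrder ι] [LocallyFiniteOrderTop ι]
  [LocallyFiniteOrderBot ι] [AddCommMonoid M]

theorem sum_sum_eq_sum_diag_add_sum_sum_Ioi (f : ι → ι → M) :
    ∑ i, ∑ j, f i j = ∑ i, f i i + ∑ i, ∑ j ∈ Ioi i, (f i j + f j i) := by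
  calc ∑ i, ∑ j, f i j = ∑ i, (f i i + ∑ j ∈ {i}ᶜ, f i j) := by
        simp only [← Fintype.sum_eq_add_sum_compl]
    _ = _ := by
        rw [sum_add_distrib, sum_sum_Ioi_add_eq_sum_sum_off_diag (fun i j => f j i)]

end Finset

namespace Algebra.TensorProduct

theorem sum_tmul_sq_of_anticomm {R A B ι : Type*} [CommRing R] [Ring A] [Ring B]
    [Algebra R A] [Algebra R B] [Fintype ι] [LinearOrder ι] [LocallyFiniteOrderTop ι]
    [LocallyFiniteOrderBot ι] (a : ι → A) (b : ι → B)
    (hanti : ∀ i j, i ≠ j → a j * a i = -(a i * a j)) :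
    (∑ i, a i ⊗ₜ[R] b i) ^ 2
      = ∑ i, (a i ^ 2) ⊗ₜ[R] (b i ^ 2) + ∑ i, ∑ j ∈ Finset.Ioi i, (a i * a j) ⊗ₜ[R] ⁅b i, b j⁆ := by
  rw [sq, Finset.sum_mul_sum]
  simp only [tmul_mul_tmul]
  rw [Finset.sum_sum_eq_sum_diag_add_sum_sum_Ioi]
  congr 1
  · simp only [sq]
  · refine Finset.sum_congr rfl fun i _ => Finset.sum_congr rfl fun j hj => ?_
    rw [hanti i j (Finset.mem_Ioi.mp hj).ne, TensorProduct.neg_tmul, ← sub_eq_add_neg,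
      ← TensorProduct.tmul_sub, Ring.lie_def]

end Algebra.TensorProduct

/-- for `g = p ⊕ k` with orthonormal (for the invariant form) basis
`e_1,…,e_n` of `p` satisfying the Clifford relations `e_i² = −1`, `e_ie_j = −e_je_i`,
and `D = Σ_i e_i ⊗ X_i ∈ Cl(p) ⊗ Ug`, one has
`D² = −1 ⊗ (Ω_g − Ω_k) + Σ_{i<j} e_i e_j ⊗ [X_i, X_j]`. -/
theorem dirac_squared (n : ℕ) (L : Type*) [LieRing L] [LieAlgebra ℝ L]
    (M : Type*) [AddCommGroup M] [Module ℝ M] (Q : QuadraticForm ℝ M)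
    (e : Fin n → M) (X : Fin n → L)
    (hQ : ∀ i, Q (e i) = -1)
    (horth : ∀ i j, i ≠ j → QuadraticMap.polar (⇑Q) (e i) (e j) = 0)
    (Ωg Ωk : UniversalEnvelopingAlgebra ℝ L)
    (hΩ : ∑ i : Fin n, (UniversalEnvelopingAlgebra.ι ℝ (X i) :
            UniversalEnvelopingAlgebra ℝ L) ^ 2 = Ωg - Ωk) :
    (∑ i : Fin n, (CliffordAlgebra.ι Q (e i)) ⊗ₜ[ℝ]
        (UniversalEnvelopingAlgebra.ι ℝ (X i) : UniversalEnvelopingAlgebra ℝ L)) ^ 2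
      = -((1 : CliffordAlgebra Q) ⊗ₜ[ℝ] (Ωg - Ωk))
        + ∑ i : Fin n, ∑ j ∈ Finset.Ioi i,
            (CliffordAlgebra.ι Q (e i) * CliffordAlgebra.ι Q (e j)) ⊗ₜ[ℝ]
              (UniversalEnvelopingAlgebra.ι ℝ ⁅X i, X j⁆ :
                UniversalEnvelopingAlgebra ℝ L) := by
  have hanti : ∀ i j, i ≠ j →
      CliffordAlgebra.ι Q (e j) * CliffordAlgebra.ι Q (e i)
        = -(CliffordAlgebra.ι Q (e i) * CliffordAlgebra.ι Q (e j)) := fun i j hij =>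
    CliffordAlgebra.ι_mul_ι_comm_of_isOrtho
      (QuadraticMap.isOrtho_polarBilin.mp (horth j i hij.symm))
  rw [Algebra.TensorProduct.sum_tmul_sq_of_anticomm _ _ hanti]
  congr 1
  · simp only [sq (CliffordAlgebra.ι Q _), CliffordAlgebra.ι_sq_scalar, hQ, map_neg, map_one,
      TensorProduct.neg_tmul, Finset.sum_neg_distrib, ← TensorProduct.tmul_sum, hΩ]
  · simp only [LieHom.map_lie]
end

section
/- With the Green's function kernel K(y,a) = a²·u_a(y) from the problem −u'' + c²u = f on (1,∞) with Dirichlet boundary at 1 (where c = √(n²+1) ≥ 1), the double integral ∫₁^∞∫₁^∞ |K(y,a)|² (da/a²)(dy/y²) is finite and bounded by a constant multiple of 1/(n²+1); consequently Σ_{n∈ℤ} of these bounds converges, i.e., the resolvent kernel is Hilbert–Schmidt on L²((1,∞)×𝕋¹, dx dy/y²). -/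
open MeasureTheory

/-- The resolvent kernel `K(y,a) = a²·u_a(y)` for `−d²/dy² + c²` on `(1,∞)` with
Dirichlet boundary at `1`. -/
noncomputable def resolventKernel (c : ℝ) (y a : ℝ) : ℝ :=
  if y ≤ a then
    (Real.exp (2 * c) * Real.exp (-c * y) - Real.exp (c * y)) * Real.exp (-c * a) / (2 * c)
  else
    (Real.exp (2 * c) * Real.exp (-c * a) - Real.exp (c * a)) * Real.exp (-c * y) / (2 * c)

/-! On `[1,∞)²` the kernel is bounded by `1/(2c)` and the weight `dy da/(y²a²)` has mass `1`,
so the `n`-th Fourier mode contributes at most `1/(4c²) = 1/(4(n²+1))`, which is summable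
over `ℤ`. -/

open Set Real

/-- For `1 ≤ u ≤ v` the numerator is `e^{c(2-u-v)} - e^{c(u-v)}`, a difference of two numbers
in `[0, 1]`. -/
lemma abs_resolventKernel_branch_le {c u v : ℝ} (hc : 0 ≤ c) (hu : 1 ≤ u) (huv : u ≤ v) :
    |(exp (2 * c) * exp (-c * u) - exp (c * u)) * exp (-c * v) / (2 * c)| ≤ (2 * c)⁻¹ := by
  have hnum : |(exp (2 * c) * exp (-c * u) - exp (c * u)) * exp (-c * v)| ≤ 1 := by
    rw [sub_mul, ← exp_add, ← exp_add, ← exp_add]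
    refine abs_sub_le_of_nonneg_of_le (exp_nonneg _) ?_ (exp_nonneg _) ?_ <;>
      rw [exp_le_one_iff] <;> nlinarith
  rw [abs_div, abs_of_nonneg (by positivity : (0 : ℝ) ≤ 2 * c), div_eq_mul_inv]
  simpa using mul_le_mul_of_nonneg_right hnum (by positivity : (0 : ℝ) ≤ (2 * c)⁻¹)

lemma abs_resolventKernel_le {c y a : ℝ} (hc : 0 ≤ c) (hy : 1 ≤ y) (ha : 1 ≤ a) :
    |resolventKernel c y a| ≤ (2 * c)⁻¹ := by
  unfold resolventKernel
  split_ifs with h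
  · exact abs_resolventKernel_branch_le hc hy h
  · exact abs_resolventKernel_branch_le hc ha (le_of_not_ge h)

lemma measurable_resolventKernel (c : ℝ) :
    Measurable fun p : ℝ × ℝ => resolventKernel c p.1 p.2 :=
  Measurable.ite (measurableSet_le measurable_fst measurable_snd) (by fun_prop) (by fun_prop)

lemma rpow_neg_two_eq_inv_sq {x : ℝ} (hx : 0 ≤ x) : x ^ (-2 : ℝ) = (x ^ 2)⁻¹ := by
  rw [rpow_neg hx, ← rpow_natCast x 2]
  norm_num

lemma integrableOn_Ioi_inv_sq {a : ℝ} (ha : 0 < a) :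
    IntegrableOn (fun x : ℝ => (x ^ 2)⁻¹) (Ioi a) :=
  (integrableOn_Ioi_rpow_of_lt (by norm_num) ha).congr_fun
    (fun x hx => rpow_neg_two_eq_inv_sq (ha.trans hx).le) measurableSet_Ioi

lemma integral_Ioi_inv_sq {a : ℝ} (ha : 0 < a) : ∫ x in Ioi a, (x ^ 2)⁻¹ = a⁻¹ := by
  rw [← setIntegral_congr_fun measurableSet_Ioi
      (fun x hx => rpow_neg_two_eq_inv_sq (ha.trans (mem_Ioi.mp hx)).le),
    integral_Ioi_rpow_of_lt (by norm_num) ha]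
  norm_num [rpow_neg_one]

section Quadrant

variable {a b : ℝ}

lemma integrableOn_inv_sq_mul_inv_sq (ha : 0 < a) (hb : 0 < b) :
    IntegrableOn (fun p : ℝ × ℝ => (p.1 ^ 2)⁻¹ * (p.2 ^ 2)⁻¹) (Ioi a ×ˢ Ioi b) := by
  rw [IntegrableOn, Measure.volume_eq_prod, ← Measure.prod_restrict]
  exact (integrableOn_Ioi_inv_sq ha).mul_prod (integrableOn_Ioi_inv_sq hb)

lemma integral_inv_sq_mul_inv_sq (ha : 0 < a) (hb : 0 < b) :
    ∫ p in Ioi a ×ˢ Ioi b, (p.1 ^ 2)⁻¹ * (p.2 ^ 2)⁻¹ = a⁻¹ * b⁻¹ := by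
  rw [Measure.volume_eq_prod, setIntegral_prod_mul (fun x : ℝ => (x ^ 2)⁻¹)
    (fun x : ℝ => (x ^ 2)⁻¹), integral_Ioi_inv_sq ha, integral_Ioi_inv_sq hb]

variable {f : ℝ × ℝ → ℝ} {M : ℝ}

lemma abs_div_sq_mul_sq_le {p : ℝ × ℝ} (hp : |f p| ≤ M) :
    |f p / (p.1 ^ 2 * p.2 ^ 2)| ≤ M * ((p.1 ^ 2)⁻¹ * (p.2 ^ 2)⁻¹) := by
  rw [abs_div, abs_of_nonneg (by positivity : (0 : ℝ) ≤ p.1 ^ 2 * p.2 ^ 2), div_eq_mul_inv,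
    mul_inv]
  gcongr

lemma integrableOn_div_sq_mul_sq (ha : 0 < a) (hb : 0 < b) (hf : Measurable f)
    (hM : ∀ p ∈ Ioi a ×ˢ Ioi b, |f p| ≤ M) :
    IntegrableOn (fun p : ℝ × ℝ => f p / (p.1 ^ 2 * p.2 ^ 2)) (Ioi a ×ˢ Ioi b) := by
  refine ((integrableOn_inv_sq_mul_inv_sq ha hb).const_mul M).mono'
    (hf.div (by fun_prop)).aestronglyMeasurable ?_
  filter_upwards [ae_restrict_mem (measurableSet_Ioi.prod measurableSet_Ioi)] with p hp
  exact abs_div_sq_mul_sq_le (hM p hp)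

lemma setIntegral_div_sq_mul_sq_le (ha : 0 < a) (hb : 0 < b) (hf : Measurable f)
    (hM : ∀ p ∈ Ioi a ×ˢ Ioi b, |f p| ≤ M) :
    ∫ p in Ioi a ×ˢ Ioi b, f p / (p.1 ^ 2 * p.2 ^ 2) ≤ M * (a⁻¹ * b⁻¹) := by
  rw [← integral_inv_sq_mul_inv_sq ha hb, ← integral_const_mul]
  exact setIntegral_mono_on (integrableOn_div_sq_mul_sq ha hb hf hM)
    ((integrableOn_inv_sq_mul_inv_sq ha hb).const_mul M)
    (measurableSet_Ioi.prod measurableSet_Ioi)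
    (fun p hp => (le_abs_self _).trans (abs_div_sq_mul_sq_le (hM p hp)))

end Quadrant

lemma summable_inv_int_sq_add_one : Summable fun n : ℤ => ((n : ℝ) ^ 2 + 1)⁻¹ := by
  refine (summable_one_div_int_pow.mpr one_lt_two).of_norm_bounded_eventually ?_
  filter_upwards [Filter.eventually_cofinite_ne 0] with n hn
  rw [norm_inv, Real.norm_of_nonneg (by positivity), one_div]
  have : (n : ℝ) ≠ 0 := Int.cast_ne_zero.mpr hn
  gcongr
  linarith

/-- with `c = √(n²+1)`, the kernel is square-integrable against
`(da/a²)(dy/y²)` on `(1,∞)²`, with integral bounded by a constant multiple of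
`1/(n²+1)`; summing over `n ∈ ℤ` converges, i.e. the resolvent is Hilbert–Schmidt on
the cylinder. -/
theorem resolvent_kernel_hilbert_schmidt :
    ∃ C : ℝ,
      (∀ n : ℤ,
        IntegrableOn
          (fun p : ℝ × ℝ =>
            (resolventKernel (Real.sqrt ((n : ℝ) ^ 2 + 1)) p.1 p.2) ^ 2
              / (p.1 ^ 2 * p.2 ^ 2))
          (Set.Ioi (1 : ℝ) ×ˢ Set.Ioi (1 : ℝ))) ∧
      (∀ n : ℤ,
        (∫ p in Set.Ioi (1 : ℝ) ×ˢ Set.Ioi (1 : ℝ),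
            (resolventKernel (Real.sqrt ((n : ℝ) ^ 2 + 1)) p.1 p.2) ^ 2
              / (p.1 ^ 2 * p.2 ^ 2))
          ≤ C / ((n : ℝ) ^ 2 + 1)) ∧
      Summable (fun n : ℤ =>
        ∫ p in Set.Ioi (1 : ℝ) ×ˢ Set.Ioi (1 : ℝ),
          (resolventKernel (Real.sqrt ((n : ℝ) ^ 2 + 1)) p.1 p.2) ^ 2
            / (p.1 ^ 2 * p.2 ^ 2)) := by
  have hK : ∀ n : ℤ, ∀ p ∈ Ioi (1 : ℝ) ×ˢ Ioi (1 : ℝ),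
      |resolventKernel (√((n : ℝ) ^ 2 + 1)) p.1 p.2 ^ 2| ≤ 4⁻¹ / ((n : ℝ) ^ 2 + 1) := by
    rintro n p ⟨hy, ha⟩
    have h := abs_resolventKernel_le (sqrt_nonneg ((n : ℝ) ^ 2 + 1)) (le_of_lt hy) (le_of_lt ha)
    calc |resolventKernel (√((n : ℝ) ^ 2 + 1)) p.1 p.2 ^ 2|
        = |resolventKernel (√((n : ℝ) ^ 2 + 1)) p.1 p.2| ^ 2 := by rw [abs_pow]
      _ ≤ ((2 * √((n : ℝ) ^ 2 + 1))⁻¹) ^ 2 := by gcongr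
      _ = 4⁻¹ / ((n : ℝ) ^ 2 + 1) := by
        rw [inv_pow, mul_pow, sq_sqrt (by positivity), mul_inv, div_eq_mul_inv]
        norm_num
  have hmeas : ∀ n : ℤ,
      Measurable fun p : ℝ × ℝ => resolventKernel (√((n : ℝ) ^ 2 + 1)) p.1 p.2 ^ 2 :=
    fun n => (measurable_resolventKernel _).pow_const 2
  have hbound : ∀ n : ℤ, ∫ p in Ioi (1 : ℝ) ×ˢ Ioi (1 : ℝ),
      resolventKernel (√((n : ℝ) ^ 2 + 1)) p.1 p.2 ^ 2 / (p.1 ^ 2 * p.2 ^ 2)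
        ≤ 4⁻¹ / ((n : ℝ) ^ 2 + 1) := fun n => by
    simpa using setIntegral_div_sq_mul_sq_le one_pos one_pos (hmeas n) (hK n)
  refine ⟨4⁻¹, fun n => integrableOn_div_sq_mul_sq one_pos one_pos (hmeas n) (hK n),
    hbound, ?_⟩
  refine Summable.of_nonneg_of_le (fun n => setIntegral_nonneg
    (measurableSet_Ioi.prod measurableSet_Ioi) (fun p _ => by positivity)) hbound ?_
  simpa [div_eq_mul_inv] using summable_inv_int_sq_add_one.mul_left 4⁻¹
end
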